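/- arXiv:1605.04995 — 2 statements merged into one kernel-verified Lean document; each statement's English description precedes it below -/
import Mathlib

section
/- Let ψ′(0+) > −∞. Let C_U, C_D ∈ ℝ satisfy C_U + C_D > 0, let f : ℝ → ℝ be continuous and piecewise continuously differentiable, set f̃(x) = f(x) + C_U q x, and suppose ā is a real number such that f̃′(x) < 0 for x < ā and f̃′(x) > 0 for x > ā (using right-derivatives where f̃ is not differentiable). Fix a* ≤ ā and b* > a*, and define v(x) = −C_U R(x−a*) + (f(a*)/q) Z(x−a*) − φ_{a*}(x; f) for x ≤ b*, v(x) = v(b*) + C_D(x−b*) for x > b*. Then for every x < a* one has v(x) = (−C_U ψ′(0+) + f̃(a*))/q − C_U x, the integral appearing in L v(x) converges absolutely, and (L − q) v(x) + f(x) = f̃(x) − f̃(a*) ≥ 0. -/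
open MeasureTheory Set Filter Topology

noncomputable section

/-- The Laplace exponent of a spectrally negative Lévy process with data `(γ, σ, ν)`. -/
def psi (γ σ : ℝ) (ν : Measure ℝ) (s : ℝ) : ℝ :=
  γ * s + σ ^ 2 * s ^ 2 / 2 +
    ∫ z in Set.Iio (0 : ℝ), (Real.exp (s * z) - 1 - s * z * (if -1 < z then (1:ℝ) else 0)) ∂ν

/-- `Φ(q) = sup {λ ≥ 0 : ψ(λ) = q}`. -/
def PhiQ (γ σ : ℝ) (ν : Measure ℝ) (q : ℝ) : ℝ :=
  sSup {l : ℝ | 0 ≤ l ∧ psi γ σ ν l = q}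

/-- `Z^{(q)}(x) = 1 + q ∫₀ˣ W(y) dy`. -/
def Zfun (q : ℝ) (W : ℝ → ℝ) (x : ℝ) : ℝ := 1 + q * ∫ y in (0:ℝ)..x, W y

/-- `Z̄^{(q)}(x) = ∫₀ˣ Z(z) dz`. -/
def Zbar (q : ℝ) (W : ℝ → ℝ) (x : ℝ) : ℝ := ∫ z in (0:ℝ)..x, Zfun q W z

/-- `R^{(q)}(x) = Z̄(x) + ψ'(0+)/q`. -/
def Rfun (q psi'0 : ℝ) (W : ℝ → ℝ) (x : ℝ) : ℝ := Zbar q W x + psi'0 / q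

/-- `Ψ(s; h) = ∫_s^∞ e^{-Φ(q)(y-s)} h(y) dy`. -/
def PsiInt (Φq s : ℝ) (h : ℝ → ℝ) : ℝ := ∫ y in Set.Ioi s, Real.exp (-Φq * (y - s)) * h y

/-- `φ_s(x; h) = ∫_s^x W(x-y) h(y) dy`. -/
def phiInt (W : ℝ → ℝ) (s x : ℝ) (h : ℝ → ℝ) : ℝ := ∫ y in s..x, W (x - y) * h y

/-- Integrand of the nonlocal part of the generator `L`. -/
def genInt (h : ℝ → ℝ) (x z : ℝ) : ℝ :=
  h (x + z) - h x - deriv h x * z * (if -1 < z then (1:ℝ) else 0)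

/-- The generator `L` of the Lévy process, applied to a sufficiently smooth function. -/
def Lgen (γ σ : ℝ) (ν : Measure ℝ) (h : ℝ → ℝ) (x : ℝ) : ℝ :=
  γ * deriv h x + σ ^ 2 / 2 * deriv (deriv h) x + ∫ z in Set.Iio (0 : ℝ), genInt h x z ∂ν

/-- Candidate value function for two-sided singular control with barriers `a < b`:
`v(x) = -C_U R(x-a) + (f(a)/q) Z(x-a) - φ_a(x; f)` for `x ≤ b`, extended linearly with
slope `C_D` above `b`. -/
def vTS (q psi'0 C_U C_D a b : ℝ) (W f : ℝ → ℝ) (x : ℝ) : ℝ :=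
  if x ≤ b then
    -C_U * Rfun q psi'0 W (x - a) + f a / q * Zfun q W (x - a) - phiInt W a x f
  else
    (-C_U * Rfun q psi'0 W (b - a) + f a / q * Zfun q W (b - a) - phiInt W a b f)
      + C_D * (x - b)

/-!
Since `W` vanishes on `(-∞, 0)`, the scale-function terms of `v` degenerate below `a`, so `v` is
affine there with slope `-C_U`; hence `L v(x) = -C_U (γ + ∫_{z ≤ -1} z ν(dz))`. That the bracket
equals `ψ'(0+)` comes from the difference quotients of `ψ` at `0`: after subtracting the quadratic
part they are the integrals of `levyKernel s z / s`, which is `≤ 0` on `(-∞, -1]` and tends to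
`z · 1_{z ≤ -1}` as `s ↓ 0`. Fatou's lemma makes `z` integrable on `(-∞, -1]`, and dominated
convergence then identifies the limit. Finally `f̃` is nonincreasing left of `ā`, which gives the
sign.
-/

theorem MeasureTheory.integrable_of_tendsto_of_integral_le {α ι : Type*} [MeasurableSpace α]
    {μ : Measure α} {l : Filter ι} [l.IsCountablyGenerated] [l.NeBot]
    {G : ι → α → ℝ} {g : α → ℝ} {C : ℝ}
    (hGmeas : ∀ i, AEStronglyMeasurable (G i) μ) (hGint : ∀ᶠ i in l, Integrable (G i) μ)
    (hGnonneg : ∀ᶠ i in l, 0 ≤ᵐ[μ] G i) (hGle : ∀ᶠ i in l, ∫ a, G i a ∂μ ≤ C)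
    (hlim : ∀ᵐ a ∂μ, Tendsto (fun i => G i a) l (𝓝 (g a))) :
    Integrable g μ := by
  refine ⟨aestronglyMeasurable_of_tendsto_ae l hGmeas hlim, ?_⟩
  have hfatou : ∫⁻ a, ‖g a‖ₑ ∂μ ≤ liminf (fun i => ∫⁻ a, ‖G i a‖ₑ ∂μ) l :=
    lintegral_congr_ae (by filter_upwards [hlim] with a ha using ha.enorm.liminf_eq) ▸
      lintegral_liminf_le' fun i => (hGmeas i).aemeasurable.enorm
  have hbound : ∀ᶠ i in l, ∫⁻ a, ‖G i a‖ₑ ∂μ ≤ ENNReal.ofReal C := by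
    filter_upwards [hGint, hGnonneg, hGle] with i hi hi0 hiC
    rw [← ofReal_integral_norm_eq_lintegral_enorm hi]
    refine ENNReal.ofReal_le_ofReal (le_of_eq_of_le (integral_congr_ae ?_) hiC)
    filter_upwards [hi0] with a ha using Real.norm_of_nonneg ha
  exact hfatou.trans_lt
    ((liminf_le_of_frequently_le' hbound.frequently).trans_lt ENNReal.ofReal_lt_top)

lemma le_of_hasDerivWithinAt_Ici_nonpos {f f' : ℝ → ℝ} {x y : ℝ} (hxy : x ≤ y)
    (hf : ContinuousOn f (Icc x y)) (hf' : ∀ t ∈ Ico x y, HasDerivWithinAt f (f' t) (Ici t) t)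
    (hneg : ∀ t ∈ Ico x y, f' t ≤ 0) :
    f y ≤ f x :=
  image_le_of_deriv_right_le_deriv_boundary (B := fun _ => f x) hf hf' le_rfl continuousOn_const
    (fun _ _ => hasDerivWithinAt_const _ _ _) hneg ⟨hxy, le_rfl⟩

section ScaleFunction

variable {q : ℝ} {W : ℝ → ℝ}

lemma Zfun_of_nonpos (hW : ∀ x < 0, W x = 0) {x : ℝ} (hx : x ≤ 0) : Zfun q W x = 1 := by
  have h : ∫ y in (0:ℝ)..x, W y = 0 := by
    rw [intervalIntegral.integral_symm, intervalIntegral.integral_of_le hx,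
      integral_Ioc_eq_integral_Ioo, setIntegral_congr_fun measurableSet_Ioo
        (g := fun _ => 0) fun y hy => hW y hy.2]
    simp
  simp [Zfun, h]

lemma Zbar_of_nonpos (hW : ∀ x < 0, W x = 0) {x : ℝ} (hx : x ≤ 0) : Zbar q W x = x := by
  rw [Zbar, intervalIntegral.integral_congr (g := fun _ => 1)]
  · simp
  · intro z hz
    rw [uIcc_of_ge hx] at hz
    exact Zfun_of_nonpos hW hz.2

lemma phiInt_of_le (hW : ∀ x < 0, W x = 0) (h : ℝ → ℝ) {s x : ℝ} (hx : x ≤ s) :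
    phiInt W s x h = 0 := by
  rw [phiInt, intervalIntegral.integral_symm, intervalIntegral.integral_of_le hx,
    setIntegral_congr_fun measurableSet_Ioc (g := fun _ => 0)
      fun y hy => by rw [hW _ (by linarith [hy.1]), zero_mul]]
  simp

lemma vTS_of_le (hW : ∀ x < 0, W x = 0) (hq : q ≠ 0) {psi'0 C_U C_D a b : ℝ} (f : ℝ → ℝ)
    (hab : a ≤ b) {x : ℝ} (hx : x ≤ a) :
    vTS q psi'0 C_U C_D a b W f x = (-C_U * psi'0 + (f a + C_U * q * a)) / q - C_U * x := by
  rw [vTS, if_pos (hx.trans hab), phiInt_of_le hW f hx, Rfun, Zbar_of_nonpos hW (by linarith),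
    Zfun_of_nonpos hW (by linarith)]
  field_simp
  ring

end ScaleFunction

section LevyMeasure

def levyKernel (s z : ℝ) : ℝ :=
  Real.exp (s * z) - 1 - s * z * (if -1 < z then (1:ℝ) else 0)

lemma measurable_levyKernel (s : ℝ) : Measurable (levyKernel s) := by
  have : Measurable fun z : ℝ => if -1 < z then (1:ℝ) else 0 :=
    measurable_const.ite measurableSet_Ioi measurable_const
  unfold levyKernel
  fun_prop

lemma levyKernel_nonpos {s z : ℝ} (hs : 0 ≤ s) (hz : z ≤ -1) : levyKernel s z ≤ 0 := by
  have : Real.exp (s * z) ≤ 1 := Real.exp_le_one_iff.2 (by nlinarith)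
  simp only [levyKernel, if_neg (not_lt.2 hz)]
  linarith

lemma abs_levyKernel_le {s z : ℝ} (hs : s ∈ Ioc 0 1) (hz : z < 0) :
    |levyKernel s z| ≤ min 1 (z ^ 2) := by
  obtain ⟨hs0, hs1⟩ := hs
  by_cases h : -1 < z
  · have hsz : |s * z| ≤ 1 := by
      rw [abs_mul, abs_of_pos hs0, abs_of_neg hz]; nlinarith
    simp only [levyKernel, if_pos h, mul_one]
    have hs2 : s ^ 2 ≤ 1 := by nlinarith
    refine (Real.abs_exp_sub_one_sub_id_le hsz).trans (le_min ?_ ?_) <;>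
      nlinarith [abs_nonneg (s * z), sq_abs (s * z), mul_le_mul_of_nonneg_right hs2 (sq_nonneg z)]
  · rw [abs_of_nonpos (levyKernel_nonpos hs0.le (not_lt.1 h)), min_eq_left (by nlinarith)]
    simp only [levyKernel, if_neg h]
    linarith [Real.exp_pos (s * z)]

lemma abs_levyKernel_div_le {s z : ℝ} (hs : s ∈ Ioc 0 1) (hz : z < 0) :
    |levyKernel s z / s| ≤ min 1 (z ^ 2) + (Iic (-1)).indicator (fun z => -z) z := by
  obtain ⟨hs0, hs1⟩ := hs
  rw [abs_div, abs_of_pos hs0, div_le_iff₀ hs0]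
  by_cases h : -1 < z
  · have hsz : |s * z| ≤ 1 := by
      rw [abs_mul, abs_of_pos hs0, abs_of_neg hz]; nlinarith
    rw [indicator_of_notMem (show z ∉ Iic (-1) from not_le.2 h), add_zero,
      min_eq_right (by nlinarith)]
    simp only [levyKernel, if_pos h, mul_one]
    nlinarith [Real.abs_exp_sub_one_sub_id_le hsz]
  · rw [abs_of_nonpos (levyKernel_nonpos hs0.le (not_lt.1 h)),
      indicator_of_mem (show z ∈ Iic (-1) from not_lt.1 h)]
    simp only [levyKernel, if_neg h]
    nlinarith [Real.add_one_le_exp (s * z), le_min zero_le_one (sq_nonneg z)]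

lemma tendsto_levyKernel_div (z : ℝ) :
    Tendsto (fun s => levyKernel s z / s) (𝓝[≠] 0) (𝓝 ((Iic (-1)).indicator id z)) := by
  have hderiv : HasDerivAt (fun s => levyKernel s z) ((Iic (-1)).indicator id z) 0 := by
    have h := ((hasDerivAt_mul_const (x := (0:ℝ)) z).exp.sub_const 1).sub
      ((hasDerivAt_mul_const z).mul_const (if -1 < z then (1:ℝ) else 0))
    by_cases hz : -1 < z
    · simpa [Pi.sub_def, levyKernel, hz, not_le.2 hz] using h
    · simpa [Pi.sub_def, levyKernel, hz, not_lt.1 hz] using h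
  refine (hasDerivAt_iff_tendsto_slope.1 hderiv).congr fun s => ?_
  simp [slope_def_field, levyKernel]

variable {ν : Measure ℝ} {γ σ d : ℝ}

lemma integrableOn_levyKernel (hν : Integrable (fun z => min 1 (z ^ 2)) ν) {s : ℝ}
    (hs : s ∈ Ioc 0 1) : IntegrableOn (levyKernel s) (Iio 0) ν := by
  refine hν.integrableOn.mono' (measurable_levyKernel s).aestronglyMeasurable ?_
  filter_upwards [ae_restrict_mem measurableSet_Iio] with z hz
  exact abs_levyKernel_le hs hz

lemma tendsto_integral_levyKernel_div (hψ : HasDerivWithinAt (psi γ σ ν) d (Ici 0) 0) :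
    Tendsto (fun s => (∫ z in Iio 0, levyKernel s z ∂ν) / s) (𝓝[>] 0) (𝓝 (d - γ)) := by
  have hquad : HasDerivAt (fun s : ℝ => γ * s + σ ^ 2 * s ^ 2 / 2) γ 0 := by
    have h1 : HasDerivAt (fun s : ℝ => γ * s) γ 0 := by
      simpa using (hasDerivAt_id (0:ℝ)).const_mul γ
    have h2 : HasDerivAt (fun s : ℝ => σ ^ 2 * s ^ 2 / 2) 0 0 := by
      simpa using ((hasDerivAt_pow 2 (0:ℝ)).const_mul (σ ^ 2)).div_const 2
    simpa [Pi.add_def] using h1.add h2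
  have h := hasDerivWithinAt_iff_tendsto_slope.1 (hψ.sub hquad.hasDerivWithinAt)
  rw [Ici_sdiff_left] at h
  refine h.congr fun s => ?_
  simp [slope_def_field, psi, levyKernel]

lemma setIntegral_Iio_zero_indicator_Iic (g : ℝ → ℝ) :
    ∫ z in Iio 0, (Iic (-1)).indicator g z ∂ν = ∫ z in Iic (-1), g z ∂ν := by
  rw [setIntegral_indicator measurableSet_Iic,
    inter_eq_right.2 (Iic_subset_Iio.2 (by norm_num))]

lemma integrableOn_Iio_zero_indicator_Iic {g : ℝ → ℝ} (hg : IntegrableOn g (Iic (-1)) ν) :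
    IntegrableOn ((Iic (-1)).indicator g) (Iio 0) ν :=
  (hg.integrable_indicator measurableSet_Iic).integrableOn

lemma setIntegral_Iic_neg_levyKernel_div_le (hν : Integrable (fun z => min 1 (z ^ 2)) ν)
    {s : ℝ} (hs : s ∈ Ioc 0 1) :
    ∫ z in Iic (-1), -(levyKernel s z / s) ∂ν
      ≤ ∫ z in Ioo (-1) 0, min 1 (z ^ 2) ∂ν - (∫ z in Iio 0, levyKernel s z ∂ν) / s := by
  have hK := integrableOn_levyKernel hν hs
  have hsplit : ∫ z in Iio 0, levyKernel s z ∂ν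
      = ∫ z in Iic (-1), levyKernel s z ∂ν + ∫ z in Ioo (-1) 0, levyKernel s z ∂ν := by
    rw [← Iic_union_Ioo_eq_Iio (by norm_num : (-1:ℝ) < 0)] at hK ⊢
    exact setIntegral_union (disjoint_left.2 fun z hz hz' => not_lt.2 hz hz'.1) measurableSet_Ioo
      (hK.mono_set subset_union_left) (hK.mono_set subset_union_right)
  have hIoo : ∫ z in Ioo (-1) 0, levyKernel s z / s ∂ν ≤ ∫ z in Ioo (-1) 0, min 1 (z ^ 2) ∂ν := by
    refine setIntegral_mono_on ((hK.mono_set fun z hz => hz.2).div_const s) hν.integrableOn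
      measurableSet_Ioo fun z hz => (le_abs_self _).trans ?_
    have h := abs_levyKernel_div_le hs hz.2
    rwa [indicator_of_notMem (show z ∉ Iic (-1) from not_le.2 hz.1), add_zero] at h
  rw [integral_neg, integral_div] at *
  rw [hsplit, add_div]
  linarith

theorem integrableOn_Iic_neg_one_of_hasDerivWithinAt_psi
    (hν : Integrable (fun z => min 1 (z ^ 2)) ν) (hψ : HasDerivWithinAt (psi γ σ ν) d (Ici 0) 0) :
    IntegrableOn (fun z => z) (Iic (-1)) ν := by
  have hs : ∀ᶠ s in 𝓝[>] (0:ℝ), s ∈ Ioc 0 1 := Ioc_mem_nhdsGT one_pos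
  have hbound : ∀ᶠ s in 𝓝[>] (0:ℝ),
      ∫ z in Ioo (-1) 0, min 1 (z ^ 2) ∂ν - (∫ z in Iio 0, levyKernel s z ∂ν) / s
        < ∫ z in Ioo (-1) 0, min 1 (z ^ 2) ∂ν - (d - γ) + 1 :=
    (tendsto_const_nhds.sub (tendsto_integral_levyKernel_div hψ)).eventually
      (eventually_lt_nhds (lt_add_one _))
  have h := integrable_of_tendsto_of_integral_le (l := 𝓝[>] (0:ℝ)) (g := fun z => -z)
    (G := fun s z => -(levyKernel s z / s))
    (fun s => ((measurable_levyKernel s).div_const s).neg.aestronglyMeasurable)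
    (hs.mono fun s hs => (((integrableOn_levyKernel hν hs).mono_set
      (Iic_subset_Iio.2 (by norm_num))).div_const s).neg)
    (hs.mono fun s hs => by
      filter_upwards [ae_restrict_mem measurableSet_Iic] with z hz
      exact neg_nonneg.2 (div_nonpos_of_nonpos_of_nonneg (levyKernel_nonpos hs.1.le hz) hs.1.le))
    ((hs.and hbound).mono fun s hs => (setIntegral_Iic_neg_levyKernel_div_le hν hs.1).trans hs.2.le)
    (by
      filter_upwards [ae_restrict_mem measurableSet_Iic] with z hz
      simpa [indicator_of_mem hz] using
        ((tendsto_levyKernel_div z).mono_left (nhdsGT_le_nhdsNE 0)).neg)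
  simpa only [IntegrableOn, Pi.neg_def, neg_neg] using h.neg

theorem setIntegral_Iic_neg_one_eq_of_hasDerivWithinAt_psi
    (hν : Integrable (fun z => min 1 (z ^ 2)) ν) (hψ : HasDerivWithinAt (psi γ σ ν) d (Ici 0) 0) :
    ∫ z in Iic (-1), z ∂ν = d - γ := by
  have hdom : Tendsto (fun s => ∫ z in Iio 0, levyKernel s z / s ∂ν) (𝓝[>] 0)
      (𝓝 (∫ z in Iio 0, (Iic (-1)).indicator id z ∂ν)) := by
    refine tendsto_integral_filter_of_dominated_convergence
      (fun z => min 1 (z ^ 2) + (Iic (-1)).indicator (fun z => -z) z)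
      (Eventually.of_forall fun s => ((measurable_levyKernel s).div_const s).aestronglyMeasurable)
      (Eventually.mono (Ioc_mem_nhdsGT one_pos) fun s hs => ?_)
      (hν.integrableOn.add (integrableOn_Iio_zero_indicator_Iic
        (integrableOn_Iic_neg_one_of_hasDerivWithinAt_psi hν hψ).neg))
      (ae_of_all _ fun z => (tendsto_levyKernel_div z).mono_left (nhdsGT_le_nhdsNE 0))
    filter_upwards [ae_restrict_mem measurableSet_Iio] with z hz
    exact abs_levyKernel_div_le hs hz
  simp only [integral_div] at hdom
  rw [← setIntegral_Iio_zero_indicator_Iic]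
  exact tendsto_nhds_unique hdom (tendsto_integral_levyKernel_div hψ)

end LevyMeasure

section Generator

variable {h : ℝ → ℝ} {c m a x : ℝ}

lemma hasDerivAt_of_eqOn_Iic_affine (hh : ∀ y ≤ a, h y = c + m * y) (hx : x < a) :
    HasDerivAt h m x := by
  have hlin : HasDerivAt (fun y => c + m * y) m x := by
    simpa using ((hasDerivAt_id x).const_mul m).const_add c
  exact hlin.congr_of_eventuallyEq (eventually_lt_nhds hx |>.mono fun y hy => hh y hy.le)

lemma deriv_deriv_of_eqOn_Iic_affine (hh : ∀ y ≤ a, h y = c + m * y) (hx : x < a) :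
    deriv (deriv h) x = 0 := by
  have hconst : deriv h =ᶠ[𝓝 x] fun _ => m :=
    eventually_lt_nhds hx |>.mono fun y hy => (hasDerivAt_of_eqOn_Iic_affine hh hy).deriv
  rw [hconst.deriv_eq, deriv_const]

lemma genInt_of_eqOn_Iic_affine (hh : ∀ y ≤ a, h y = c + m * y) (hx : x < a) {z : ℝ}
    (hz : z < 0) : genInt h x z = (Iic (-1)).indicator (fun z => m * z) z := by
  rw [genInt, (hasDerivAt_of_eqOn_Iic_affine hh hx).deriv, hh x hx.le, hh (x + z) (by linarith)]
  by_cases hz1 : -1 < z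
  · rw [if_pos hz1, indicator_of_notMem (show z ∉ Iic (-1) from not_le.2 hz1)]
    ring
  · rw [if_neg hz1, indicator_of_mem (show z ∈ Iic (-1) from not_lt.1 hz1)]
    ring

variable {ν : Measure ℝ} {γ σ d : ℝ}

lemma integrableOn_genInt_of_eqOn_Iic_affine (hν : Integrable (fun z => min 1 (z ^ 2)) ν)
    (hψ : HasDerivWithinAt (psi γ σ ν) d (Ici 0) 0) (hh : ∀ y ≤ a, h y = c + m * y)
    (hx : x < a) : IntegrableOn (genInt h x) (Iio 0) ν :=
  (integrableOn_Iio_zero_indicator_Iic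
    ((integrableOn_Iic_neg_one_of_hasDerivWithinAt_psi hν hψ).const_mul m)).congr_fun
      (fun _ hz => (genInt_of_eqOn_Iic_affine hh hx hz).symm) measurableSet_Iio

lemma Lgen_of_eqOn_Iic_affine (hν : Integrable (fun z => min 1 (z ^ 2)) ν)
    (hψ : HasDerivWithinAt (psi γ σ ν) d (Ici 0) 0) (hh : ∀ y ≤ a, h y = c + m * y)
    (hx : x < a) : Lgen γ σ ν h x = m * d := by
  rw [Lgen, (hasDerivAt_of_eqOn_Iic_affine hh hx).deriv, deriv_deriv_of_eqOn_Iic_affine hh hx,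
    setIntegral_congr_fun measurableSet_Iio fun _ hz => genInt_of_eqOn_Iic_affine hh hx hz,
    setIntegral_Iio_zero_indicator_Iic, integral_const_mul,
    setIntegral_Iic_neg_one_eq_of_hasDerivWithinAt_psi hν hψ]
  ring

end Generator

theorem stmt1_general
    (γ σ q : ℝ) (ν : Measure ℝ) (W : ℝ → ℝ)
    (hνint : Integrable (fun z => min 1 (z ^ 2)) ν)
    (hq : 0 < q)
    (hWzero : ∀ x < 0, W x = 0)
    (psi'0 : ℝ) (hpsi'0 : HasDerivWithinAt (psi γ σ ν) psi'0 (Set.Ici 0) 0)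
    (C_U C_D : ℝ)
    (f f' : ℝ → ℝ) (hf : Continuous f)
    (hf' : ∀ x, HasDerivWithinAt f (f' x) (Set.Ici x) x)
    (abar : ℝ)
    (habar1 : ∀ x < abar, f' x + C_U * q < 0)
    (a b : ℝ) (ha : a ≤ abar) (hab : a < b) :
    ∀ x < a,
      vTS q psi'0 C_U C_D a b W f x
          = (-C_U * psi'0 + (f a + C_U * q * a)) / q - C_U * x ∧
      IntegrableOn (genInt (vTS q psi'0 C_U C_D a b W f) x) (Set.Iio 0) ν ∧
      Lgen γ σ ν (vTS q psi'0 C_U C_D a b W f) x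
          - q * vTS q psi'0 C_U C_D a b W f x + f x
        = (f x + C_U * q * x) - (f a + C_U * q * a) ∧
      0 ≤ (f x + C_U * q * x) - (f a + C_U * q * a) := by
  intro x hx
  have hv : ∀ y ≤ a, vTS q psi'0 C_U C_D a b W f y
      = (-C_U * psi'0 + (f a + C_U * q * a)) / q + -C_U * y := fun y hy => by
    rw [vTS_of_le hWzero hq.ne' f hab.le hy]; ring
  have hmono : f a + C_U * q * a ≤ f x + C_U * q * x :=
    le_of_hasDerivWithinAt_Ici_nonpos hx.le (by fun_prop)
      (fun t _ => (hf' t).add ((hasDerivAt_id t).const_mul (C_U * q)).hasDerivWithinAt)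
      (fun t ht => by simpa using (habar1 t (ht.2.trans_le ha)).le)
  refine ⟨(hv x hx.le).trans (by ring), integrableOn_genInt_of_eqOn_Iic_affine hνint hpsi'0 hv hx,
    ?_, sub_nonneg.2 hmono⟩
  rw [Lgen_of_eqOn_Iic_affine hνint hpsi'0 hv hx, hv x hx.le]
  field_simp
  ring

theorem stmt1
    (γ σ q : ℝ) (ν : Measure ℝ) (W : ℝ → ℝ)
    (hσ : 0 ≤ σ)
    (hνconc : ν (Set.Ici 0) = 0)
    (hνint : Integrable (fun z => min 1 (z ^ 2)) ν)
    (hψtop : Tendsto (psi γ σ ν) atTop atTop)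
    (hq : 0 < q)
    (hΦpos : 0 < PhiQ γ σ ν q)
    (hWnonneg : ∀ x, 0 ≤ W x)
    (hWzero : ∀ x < 0, W x = 0)
    (hWcont : ContinuousOn W (Set.Ici 0))
    (hWmono : StrictMonoOn W (Set.Ici 0))
    (hWlaplace : ∀ s, PhiQ γ σ ν q < s →
      ∫ x in Set.Ioi (0:ℝ), Real.exp (-s * x) * W x = 1 / (psi γ σ ν s - q))
    (psi'0 : ℝ) (hpsi'0 : HasDerivWithinAt (psi γ σ ν) psi'0 (Set.Ici 0) 0)
    (C_U C_D : ℝ) (hC : 0 < C_U + C_D)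
    (f f' : ℝ → ℝ) (hf : Continuous f)
    (hf' : ∀ x, HasDerivWithinAt f (f' x) (Set.Ici x) x)
    (abar : ℝ)
    (habar1 : ∀ x < abar, f' x + C_U * q < 0)
    (habar2 : ∀ x, abar < x → 0 < f' x + C_U * q)
    (a b : ℝ) (ha : a ≤ abar) (hab : a < b) :
    ∀ x < a,
      vTS q psi'0 C_U C_D a b W f x
          = (-C_U * psi'0 + (f a + C_U * q * a)) / q - C_U * x ∧
      IntegrableOn (genInt (vTS q psi'0 C_U C_D a b W f) x) (Set.Iio 0) ν ∧
      Lgen γ σ ν (vTS q psi'0 C_U C_D a b W f) x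
          - q * vTS q psi'0 C_U C_D a b W f x + f x
        = (f x + C_U * q * x) - (f a + C_U * q * a) ∧
      0 ≤ (f x + C_U * q * x) - (f a + C_U * q * a) :=
  stmt1_general γ σ q ν W hνint hq hWzero psi'0 hpsi'0 C_U C_D f f' hf hf' abar habar1 a b ha hab
end
end

section
/- Let ψ′(0+) > −∞, suppose W is continuously differentiable on (0,∞), let f : ℝ → ℝ be continuously differentiable, set f̃(x) = f(x) + C_U q x, and for a < b let Λ(a,b) = C_D + C_U + φ_a(b; f̃′). Define v_{a,b}(x) = (Λ(a,b)/(q W(b−a))) Z(x−a) − C_U R(x−a) + (f(a)/q) Z(x−a) − φ_a(x; f) for x ≤ b. Then v_{a,b} is differentiable on (a,b) with v_{a,b}′(x) = Λ(a,b) W(x−a)/W(b−a) − C_U − φ_a(x; f̃′) for all a < x < b; in particular v_{a,b}′(b−) = C_D and v_{a,b}′(a+) = Λ(a,b) W(0)/W(b−a) − C_U. -/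
/-! Integrating by parts against `Wbar W u = ∫₀ᵘ W`, which vanishes on `(-∞, 0]`, turns `φ_a(x; f)`
into `f(a) Wbar W (x - a) + ∫_a^c Wbar W (x - y) f'(y) dy` for `a ≤ x ≤ c`. `Wbar W` is Lipschitz on
half-lines bounded above, so differentiating under the integral gives
`φ_a(x; f)' = f(a) W(x - a) + φ_a(x; f')`, and with `Z' = q W`, `Z̄' = Z` this is the formula for
`v_{a,b}'`. A monotone `W` is continuous off a countable set, so by dominated convergence
`x ↦ φ_a(x; g)` is continuous for continuous `g`; the one-sided limits are then values at `b` and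
at `a`. -/

open MeasureTheory Set Filter Topology

noncomputable section

/-- `Λ(a,b) = C_D + C_U + φ_a(b; f̃')` where `f̃(x) = f(x) + C_U q x`. -/
def Lam3 (q C_U C_D : ℝ) (W f : ℝ → ℝ) (a b : ℝ) : ℝ :=
  C_D + C_U + phiInt W a b (fun y => deriv f y + C_U * q)

/-- `v_{a,b}(x) = (Λ(a,b)/(q W(b−a))) Z(x−a) − C_U R(x−a) + (f(a)/q) Z(x−a) − φ_a(x; f)`. -/
def v3 (q psi'0 C_U C_D : ℝ) (W f : ℝ → ℝ) (a b x : ℝ) : ℝ :=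
  Lam3 q C_U C_D W f a b / (q * W (b - a)) * Zfun q W (x - a)
    - C_U * Rfun q psi'0 W (x - a) + f a / q * Zfun q W (x - a) - phiInt W a x f

def Wbar (W : ℝ → ℝ) (x : ℝ) : ℝ := ∫ y in (0:ℝ)..x, W y

section ScaleFunction

variable {W g : ℝ → ℝ}

lemma monotone_of_monotoneOn_Ici (hW0 : 0 ≤ W) (hWneg : ∀ u < 0, W u = 0)
    (hW : MonotoneOn W (Ici 0)) : Monotone W := by
  intro u v huv
  rcases lt_or_ge u 0 with hu | hu
  · rw [hWneg u hu]
    exact hW0 v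
  · exact hW hu (hu.trans huv) huv

lemma nonneg_of_monotone_of_eq_zero (hW : Monotone W) (hWneg : ∀ u < 0, W u = 0) : 0 ≤ W :=
  fun x => (hWneg _ (min_lt_of_right_lt neg_one_lt_zero)).ge.trans (hW (min_le_left x (-1)))

lemma Monotone.ae_continuousAt_sub (hW : Monotone W) (x : ℝ) :
    ∀ᵐ y, ContinuousAt W (x - y) :=
  (hW.countable_not_continuousAt.preimage sub_right_injective).ae_notMem volume
    |>.mono fun _ hy => not_not.1 hy

lemma Monotone.intervalIntegrable_comp_sub_mul (hW : Monotone W) (hg : Continuous g)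
    (x a c : ℝ) : IntervalIntegrable (fun y => W (x - y) * g y) volume a c :=
  (hW.comp_antitone fun _ _ h => sub_le_sub_left h x).intervalIntegrable.mul_continuousOn
    hg.continuousOn

lemma integral_comp_sub_mul_eq_of_le (hW : Monotone W) (hWneg : ∀ u < 0, W u = 0)
    (hg : Continuous g) (a : ℝ) {x c : ℝ} (hxc : x ≤ c) :
    ∫ y in a..x, W (x - y) * g y = ∫ y in a..c, W (x - y) * g y := by
  have htail : ∫ y in x..c, W (x - y) * g y = 0 := by
    rw [intervalIntegral.integral_of_le hxc]
    exact setIntegral_eq_zero_of_forall_eq_zero fun y hy => by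
      rw [hWneg _ (sub_neg.2 hy.1), zero_mul]
  rw [← intervalIntegral.integral_add_adjacent_intervals
    (hW.intervalIntegrable_comp_sub_mul hg x a x) (hW.intervalIntegrable_comp_sub_mul hg x x c),
    htail, add_zero]

lemma continuous_integral_comp_sub_mul (hW : Monotone W) (hW0 : 0 ≤ W) (hg : Continuous g)
    (a c : ℝ) : Continuous fun x => ∫ y in a..c, W (x - y) * g y := by
  refine continuous_iff_continuousAt.2 fun x₀ => ?_
  refine intervalIntegral.continuousAt_of_dominated_interval
    (bound := fun y => W (x₀ + 1 - min a c) * |g y|) ?_ ?_ ?_ ?_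
  · exact Eventually.of_forall fun x =>
      (hW.intervalIntegrable_comp_sub_mul hg x a c).def'.aestronglyMeasurable
  · filter_upwards [Iio_mem_nhds (lt_add_one x₀)] with x hx
    refine Eventually.of_forall fun y hy => ?_
    rw [norm_mul, Real.norm_of_nonneg (hW0 _), Real.norm_eq_abs]
    refine mul_le_mul_of_nonneg_right (hW ?_) (abs_nonneg _)
    linarith [hy.1, mem_Iio.1 hx]
  · exact (continuous_const.mul hg.abs).intervalIntegrable a c
  · filter_upwards [hW.ae_continuousAt_sub x₀] with y hy _
    exact (hy.comp_of_eq (continuous_sub_right y).continuousAt rfl).mul continuousAt_const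

lemma continuous_phiInt (hW : Monotone W) (hWneg : ∀ u < 0, W u = 0) (hg : Continuous g)
    (a : ℝ) : Continuous fun x => phiInt W a x g := by
  refine continuous_iff_continuousAt.2 fun x₀ => ?_
  refine ((continuous_integral_comp_sub_mul hW (nonneg_of_monotone_of_eq_zero hW hWneg) hg a
    (x₀ + 1)).continuousAt).congr ?_
  filter_upwards [Iio_mem_nhds (lt_add_one x₀)] with x hx
  exact (integral_comp_sub_mul_eq_of_le hW hWneg hg a (le_of_lt hx)).symm

lemma Wbar_eq_zero_of_nonpos (hWneg : ∀ u < 0, W u = 0) {x : ℝ} (hx : x ≤ 0) : Wbar W x = 0 := by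
  rw [Wbar, intervalIntegral.integral_symm, neg_eq_zero, intervalIntegral.integral_of_le hx,
    integral_Ioc_eq_integral_Ioo]
  exact setIntegral_eq_zero_of_forall_eq_zero fun u hu => hWneg u hu.2

lemma continuous_Wbar (hW : Monotone W) : Continuous (Wbar W) :=
  intervalIntegral.continuous_primitive (fun _ _ => hW.intervalIntegrable) 0

lemma hasDerivAt_Wbar (hW : Monotone W) {x : ℝ} (hx : ContinuousAt W x) :
    HasDerivAt (Wbar W) (W x) x :=
  intervalIntegral.integral_hasDerivAt_right hW.intervalIntegrable
    hW.measurable.stronglyMeasurable.stronglyMeasurableAtFilter hx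

lemma monotone_Wbar (hW : Monotone W) (hW0 : 0 ≤ W) : Monotone (Wbar W) := fun x y hxy => by
  rw [← sub_nonneg, Wbar, Wbar,
    intervalIntegral.integral_interval_sub_left hW.intervalIntegrable hW.intervalIntegrable]
  exact intervalIntegral.integral_nonneg hxy fun u _ => hW0 u

lemma abs_Wbar_sub_le (hW : Monotone W) (hW0 : 0 ≤ W) {x y M : ℝ} (hx : x ≤ M) (hy : y ≤ M) :
    |Wbar W x - Wbar W y| ≤ W M * |x - y| := by
  rw [Wbar, Wbar,
    intervalIntegral.integral_interval_sub_left hW.intervalIntegrable hW.intervalIntegrable]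
  refine intervalIntegral.norm_integral_le_of_norm_le_const (f := W) fun u hu => ?_
  rw [Real.norm_of_nonneg (hW0 u)]
  exact hW (hu.2.trans (max_le hy hx))

lemma hasDerivAt_integral_Wbar_comp_sub_mul (hW : Monotone W) (hW0 : 0 ≤ W) (hg : Continuous g)
    (a c x₀ : ℝ) :
    HasDerivAt (fun x => ∫ y in a..c, Wbar W (x - y) * g y)
      (∫ y in a..c, W (x₀ - y) * g y) x₀ := by
  set M := x₀ + 1 - min a c
  have hM : ∀ x ∈ Iio (x₀ + 1), ∀ y ∈ uIoc a c, x - y ≤ M := fun x hx y hy => by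
    linarith [hy.1, mem_Iio.1 hx]
  have hF : ∀ x, Continuous fun y => Wbar W (x - y) * g y := fun x =>
    ((continuous_Wbar hW).comp (continuous_sub_left x)).mul hg
  refine (intervalIntegral.hasDerivAt_integral_of_dominated_loc_of_lip
    (Iio_mem_nhds (lt_add_one x₀)) (bound := fun y => W M * g y)
    (Eventually.of_forall fun x => (hF x).aestronglyMeasurable) ((hF x₀).intervalIntegrable a c)
    (hW.intervalIntegrable_comp_sub_mul hg x₀ a c).def'.aestronglyMeasurable ?_
    ((continuous_const.mul hg).intervalIntegrable a c) ?_).2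
  · refine Eventually.of_forall fun y hy => LipschitzOnWith.of_dist_le_mul fun x hx x' hx' => ?_
    have hWbar := abs_Wbar_sub_le hW hW0 (hM x hx y hy) (hM x' hx' y hy)
    rw [sub_sub_sub_cancel_right] at hWbar
    rw [Real.coe_nnabs, Real.dist_eq, Real.dist_eq, ← sub_mul, abs_mul, abs_mul,
      abs_of_nonneg (hW0 M), mul_right_comm]
    exact mul_le_mul_of_nonneg_right hWbar (abs_nonneg _)
  · filter_upwards [hW.ae_continuousAt_sub x₀] with y hy _
    exact ((hasDerivAt_Wbar hW hy).comp_sub_const x₀ y).mul_const (g y)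

lemma phiInt_eq_Wbar_mul_add_integral (hW : Monotone W) (hWneg : ∀ u < 0, W u = 0)
    {h h' : ℝ → ℝ} (hh : ∀ t, HasDerivAt h (h' t) t) (hh' : Continuous h') {a x : ℝ}
    (hax : a ≤ x) :
    phiInt W a x h = h a * Wbar W (x - a) + ∫ y in a..x, Wbar W (x - y) * h' y := by
  have hWbar := monotone_Wbar hW (nonneg_of_monotone_of_eq_zero hW hWneg)
  have hh_cont : Continuous h := continuous_iff_continuousAt.2 fun t => (hh t).continuousAt
  have hint₁ : IntervalIntegrable (fun y => -(W (x - y) * h y)) volume a x :=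
    (hW.intervalIntegrable_comp_sub_mul hh_cont x a x).neg
  have hint₂ := hWbar.intervalIntegrable_comp_sub_mul hh' x a x
  have hparts := integral_eq_of_hasDerivAt_off_countable_of_le
    (fun y => Wbar W (x - y) * h y) (fun y => -(W (x - y) * h y) + Wbar W (x - y) * h' y) hax
    (hW.countable_not_continuousAt.preimage sub_right_injective)
    (((continuous_Wbar hW).comp (continuous_sub_left x)).mul hh_cont).continuousOn
    (fun y hy => by
      simpa only [neg_mul] using
        ((hasDerivAt_Wbar hW (not_not.1 hy.2)).comp_const_sub x y).fun_mul (hh y))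
    (hint₁.add hint₂)
  rw [intervalIntegral.integral_add hint₁ hint₂, intervalIntegral.integral_neg, sub_self,
    Wbar_eq_zero_of_nonpos hWneg le_rfl, zero_mul] at hparts
  rw [phiInt]
  linarith

lemma hasDerivAt_phiInt (hW : Monotone W) (hWneg : ∀ u < 0, W u = 0) {h h' : ℝ → ℝ}
    (hh : ∀ t, HasDerivAt h (h' t) t) (hh' : Continuous h') {a x : ℝ} (hax : a < x)
    (hWx : ContinuousAt W (x - a)) :
    HasDerivAt (fun x => phiInt W a x h) (h a * W (x - a) + phiInt W a x h') x := by
  have hW0 := nonneg_of_monotone_of_eq_zero hW hWneg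
  have hWbar := monotone_Wbar hW hW0
  have hWbarneg : ∀ u < 0, Wbar W u = 0 := fun u hu => Wbar_eq_zero_of_nonpos hWneg hu.le
  have hrepr : (fun x' => h a * Wbar W (x' - a) + ∫ y in a..x + 1, Wbar W (x' - y) * h' y)
      =ᶠ[𝓝 x] fun x' => phiInt W a x' h := by
    filter_upwards [Ioo_mem_nhds hax (lt_add_one x)] with x' hx'
    rw [phiInt_eq_Wbar_mul_add_integral hW hWneg hh hh' hx'.1.le,
      integral_comp_sub_mul_eq_of_le hWbar hWbarneg hh' a hx'.2.le]
  have hφ' : phiInt W a x h' = ∫ y in a..x + 1, W (x - y) * h' y :=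
    integral_comp_sub_mul_eq_of_le hW hWneg hh' a (lt_add_one x).le
  rw [hφ']
  exact ((((hasDerivAt_Wbar hW hWx).comp_sub_const x a).const_mul (h a)).add
    (hasDerivAt_integral_Wbar_comp_sub_mul hW hW0 hh' a (x + 1) x)).congr_of_eventuallyEq
    hrepr.symm

lemma phiInt_add_const (hW : Monotone W) (hg : Continuous g) (a x C : ℝ) :
    phiInt W a x (fun y => g y + C) = phiInt W a x g + C * Wbar W (x - a) := by
  have hconst : ∫ y in a..x, W (x - y) = Wbar W (x - a) := by
    rw [intervalIntegral.integral_comp_sub_left, sub_self]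
    rfl
  simp only [phiInt, mul_add]
  rw [intervalIntegral.integral_add (hW.intervalIntegrable_comp_sub_mul hg x a x)
      (hW.intervalIntegrable_comp_sub_mul continuous_const x a x),
    intervalIntegral.integral_mul_const, hconst, mul_comm]

lemma hasDerivAt_Zfun (q : ℝ) (hW : Monotone W) {x : ℝ} (hx : ContinuousAt W x) :
    HasDerivAt (Zfun q W) (q * W x) x :=
  ((hasDerivAt_Wbar hW hx).const_mul q).const_add 1

lemma hasDerivAt_Rfun (q c : ℝ) (hW : Monotone W) (x : ℝ) :
    HasDerivAt (Rfun q c W) (Zfun q W x) x := by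
  have hZ : Continuous (Zfun q W) :=
    continuous_const.add (continuous_const.mul (continuous_Wbar hW))
  exact (intervalIntegral.integral_hasDerivAt_right (hZ.intervalIntegrable 0 x)
    (hZ.stronglyMeasurableAtFilter _ _) hZ.continuousAt).add_const _

lemma hasDerivAt_v3 {q : ℝ} (hq : q ≠ 0) (psi'0 C_U C_D : ℝ) {f : ℝ → ℝ} (hf : ContDiff ℝ 1 f)
    (hW : Monotone W) (hWneg : ∀ u < 0, W u = 0) {a b x : ℝ} (hWba : W (b - a) ≠ 0)
    (hax : a < x) (hWx : ContinuousAt W (x - a)) :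
    HasDerivAt (v3 q psi'0 C_U C_D W f a b)
      (Lam3 q C_U C_D W f a b * W (x - a) / W (b - a) - C_U
        - phiInt W a x (fun y => deriv f y + C_U * q)) x := by
  have hf' : Continuous (deriv f) := hf.continuous_deriv le_rfl
  have hZ := (hasDerivAt_Zfun q hW hWx).comp_sub_const x a
  have hR := (hasDerivAt_Rfun q psi'0 hW (x - a)).comp_sub_const x a
  have hφ := hasDerivAt_phiInt hW hWneg
    (fun t => (hf.differentiable one_ne_zero t).hasDerivAt) hf' hax hWx
  refine ((((hZ.const_mul _).sub (hR.const_mul C_U)).add (hZ.const_mul _)).sub hφ).congr_deriv ?_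
  have hZW : Zfun q W (x - a) = 1 + q * Wbar W (x - a) := rfl
  rw [phiInt_add_const hW hf' a x, hZW]
  field_simp
  ring

end ScaleFunction

theorem stmt3_general
    (q : ℝ) (W : ℝ → ℝ)
    (hq : 0 < q)
    (hWnonneg : ∀ x, 0 ≤ W x)
    (hWzero : ∀ x < 0, W x = 0)
    (hWcont : ContinuousOn W (Set.Ici 0))
    (hWmono : StrictMonoOn W (Set.Ici 0))
    (psi'0 : ℝ)
    (C_U C_D : ℝ) (f : ℝ → ℝ) (hf : ContDiff ℝ 1 f)
    (a b : ℝ) (hab : a < b) :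
    (∀ x, a < x → x < b →
      HasDerivAt (v3 q psi'0 C_U C_D W f a b)
        (Lam3 q C_U C_D W f a b * W (x - a) / W (b - a) - C_U
          - phiInt W a x (fun y => deriv f y + C_U * q)) x) ∧
    Tendsto (fun x => Lam3 q C_U C_D W f a b * W (x - a) / W (b - a) - C_U
        - phiInt W a x (fun y => deriv f y + C_U * q)) (𝓝[<] b) (𝓝 C_D) ∧
    Tendsto (fun x => Lam3 q C_U C_D W f a b * W (x - a) / W (b - a) - C_U
        - phiInt W a x (fun y => deriv f y + C_U * q)) (𝓝[>] a)
      (𝓝 (Lam3 q C_U C_D W f a b * W 0 / W (b - a) - C_U)) := by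
  have hW : Monotone W := monotone_of_monotoneOn_Ici hWnonneg hWzero hWmono.monotoneOn
  have hWba : W (b - a) ≠ 0 :=
    ((hWnonneg 0).trans_lt (hWmono self_mem_Ici (sub_pos.2 hab).le (sub_pos.2 hab))).ne'
  have hφ : Continuous fun x => phiInt W a x (fun y => deriv f y + C_U * q) :=
    continuous_phiInt hW hWzero ((hf.continuous_deriv le_rfl).add continuous_const) a
  set v' := fun x => Lam3 q C_U C_D W f a b * W (x - a) / W (b - a) - C_U
    - phiInt W a x (fun y => deriv f y + C_U * q) with hv'
  have hWa : ContinuousOn (fun x => W (x - a)) (Ici a) :=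
    hWcont.comp (by fun_prop) fun _ hx => mem_Ici.2 (sub_nonneg.2 hx)
  have hv'cont : ContinuousOn v' (Ici a) :=
    (((continuousOn_const.mul hWa).div_const _).sub continuousOn_const).sub hφ.continuousOn
  refine ⟨fun x hax _ => ?_, ?_, ?_⟩
  · exact hasDerivAt_v3 hq.ne' psi'0 C_U C_D hf hW hWzero hWba hax
      (hWcont.continuousAt (Ici_mem_nhds (sub_pos.2 hax)))
  · convert (hv'cont.continuousAt (Ici_mem_nhds hab)).tendsto.mono_left nhdsWithin_le_nhds
      using 2
    simp only [hv', Lam3]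
    field_simp
    ring
  · convert ((hv'cont a self_mem_Ici).mono Ioi_subset_Ici_self).tendsto using 2
    simp [hv', phiInt]

theorem stmt3
    (γ σ q : ℝ) (ν : Measure ℝ) (W : ℝ → ℝ)
    (hσ : 0 ≤ σ)
    (hνconc : ν (Set.Ici 0) = 0)
    (hνint : Integrable (fun z => min 1 (z ^ 2)) ν)
    (hψtop : Tendsto (psi γ σ ν) atTop atTop)
    (hq : 0 < q)
    (hΦpos : 0 < PhiQ γ σ ν q)
    (hWnonneg : ∀ x, 0 ≤ W x)
    (hWzero : ∀ x < 0, W x = 0)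
    (hWcont : ContinuousOn W (Set.Ici 0))
    (hWmono : StrictMonoOn W (Set.Ici 0))
    (hWlaplace : ∀ s, PhiQ γ σ ν q < s →
      ∫ x in Set.Ioi (0:ℝ), Real.exp (-s * x) * W x = 1 / (psi γ σ ν s - q))
    (psi'0 : ℝ) (hpsi'0 : HasDerivWithinAt (psi γ σ ν) psi'0 (Set.Ici 0) 0)
    (hW1 : ContDiffOn ℝ 1 W (Set.Ioi 0))
    (C_U C_D : ℝ) (f : ℝ → ℝ) (hf : ContDiff ℝ 1 f)
    (a b : ℝ) (hab : a < b) :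
    (∀ x, a < x → x < b →
      HasDerivAt (v3 q psi'0 C_U C_D W f a b)
        (Lam3 q C_U C_D W f a b * W (x - a) / W (b - a) - C_U
          - phiInt W a x (fun y => deriv f y + C_U * q)) x) ∧
    Tendsto (fun x => Lam3 q C_U C_D W f a b * W (x - a) / W (b - a) - C_U
        - phiInt W a x (fun y => deriv f y + C_U * q)) (𝓝[<] b) (𝓝 C_D) ∧
    Tendsto (fun x => Lam3 q C_U C_D W f a b * W (x - a) / W (b - a) - C_U
        - phiInt W a x (fun y => deriv f y + C_U * q)) (𝓝[>] a)
      (𝓝 (Lam3 q C_U C_D W f a b * W 0 / W (b - a) - C_U)) :=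
  stmt3_general q W hq hWnonneg hWzero hWcont hWmono psi'0 C_U C_D f hf a b hab
end
end
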